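/- arXiv:1808.00535 — 2 statements merged into one kernel-verified Lean document; each statement's English description precedes it below -/
import Mathlib

section
/- A set of D pure states {|ψ_j⟩} in a D-dimensional Hilbert space forms an orthonormal basis if and only if their generalized Bloch vectors {b_j} satisfy ∑_j b_j = 0 and b_h · b_k = D/(D-1) δ_{hk} − 1/(D-1). -/
open Matrix

/-! With `ρ_j = |ψ_j⟩⟨ψ_j|`, trace-orthonormality of the generators gives
`|⟨ψ_h|ψ_k⟩|² = Tr(ρ_h ρ_k) = 1/D + (D-1)/D · b_h·b_k`, and `Tr ρ_j = 1` gives `⟨ψ_j|ψ_j⟩ = 1`.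
So orthonormality of the states is exactly the Gram condition on the Bloch vectors, which
already forces `∑ b_j = 0`: `‖∑ b_j‖²` is the sum of all Gram entries, `D²/(D-1) - D²/(D-1)`. -/

section PureState

variable {n : Type*} [Fintype n]

lemma trace_vecMulVec_star_mul_vecMulVec_star (ψ φ : n → ℂ) :
    trace (vecMulVec ψ (star ψ) * vecMulVec φ (star φ)) = ((‖star ψ ⬝ᵥ φ‖ ^ 2 : ℝ) : ℂ) := by
  rw [vecMulVec_mul_vecMulVec, trace_vecMulVec, dotProduct_smul, smul_eq_mul,
    dotProduct_comm ψ, star_dotProduct φ ψ, Complex.star_def, Complex.mul_conj']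
  push_cast
  rfl

lemma forall_star_dotProduct_eq_ite_iff_norm_sq {κ : Type*} [DecidableEq κ] (ψ : κ → n → ℂ)
    (hnorm : ∀ j, star (ψ j) ⬝ᵥ ψ j = 1) :
    (∀ h k, star (ψ h) ⬝ᵥ ψ k = if h = k then 1 else 0) ↔
      ∀ h k, ‖star (ψ h) ⬝ᵥ ψ k‖ ^ 2 = if h = k then 1 else 0 := by
  refine forall₂_congr fun h k => ?_
  split_ifs with hhk
  · subst hhk; simp [hnorm]
  · simp

end PureState

section Bloch

variable {ι : Type*} [Fintype ι]

lemma trace_sum_smul_eq_zero {n : Type*} [Fintype n] (e : ι → Matrix n n ℂ)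
    (he : ∀ i, trace (e i) = 0) (x : ι → ℝ) : trace (∑ i, (x i : ℂ) • e i) = 0 := by
  simp [trace_sum, he]

lemma trace_sum_smul_mul_sum_smul {n : Type*} [Fintype n] [DecidableEq ι] (e : ι → Matrix n n ℂ)
    (he : ∀ i j, trace (e i * e j) = if i = j then 1 else 0) (x y : ι → ℝ) :
    trace ((∑ i, (x i : ℂ) • e i) * ∑ i, (y i : ℂ) • e i) = ((∑ i, x i * y i : ℝ) : ℂ) := by
  simp [Finset.sum_mul, Finset.mul_sum, trace_sum, he, mul_comm]

/-- The state `I/D + √((D-1)/D) x·e`; `e` stands for the trace-orthonormal `γ = γ̂/√2`. -/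
noncomputable def blochState (D : ℕ) (e : ι → Matrix (Fin D) (Fin D) ℂ) (x : ι → ℝ) :
    Matrix (Fin D) (Fin D) ℂ :=
  (D : ℂ)⁻¹ • 1 + ((√(((D : ℝ) - 1) / D) : ℝ) : ℂ) • ∑ i, (x i : ℂ) • e i

variable {D : ℕ} {e : ι → Matrix (Fin D) (Fin D) ℂ}

lemma trace_blochState (hD : D ≠ 0) (he : ∀ i, trace (e i) = 0) (x : ι → ℝ) :
    trace (blochState D e x) = 1 := by
  simp only [blochState, trace_add, trace_smul, trace_one, Fintype.card_fin,
    trace_sum_smul_eq_zero e he, smul_eq_mul]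
  simp [hD]

lemma trace_blochState_mul_blochState [DecidableEq ι] (hD : D ≠ 0) (he0 : ∀ i, trace (e i) = 0)
    (he : ∀ i j, trace (e i * e j) = if i = j then 1 else 0) (x y : ι → ℝ) :
    trace (blochState D e x * blochState D e y) =
      (((D : ℝ)⁻¹ + ((D : ℝ) - 1) / D * ∑ i, x i * y i : ℝ) : ℂ) := by
  have hD1 : (1 : ℝ) ≤ D := by exact_mod_cast Nat.one_le_iff_ne_zero.mpr hD
  have hsq : √(((D : ℝ) - 1) / D) * √(((D : ℝ) - 1) / D) = ((D : ℝ) - 1) / D :=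
    Real.mul_self_sqrt (div_nonneg (by linarith) (by linarith))
  simp only [blochState, add_mul, mul_add, smul_mul_smul_comm, Matrix.one_mul, Matrix.mul_one,
    trace_add, trace_smul, trace_one, trace_sum_smul_eq_zero e he0,
    trace_sum_smul_mul_sum_smul e he, Fintype.card_fin, smul_eq_mul, mul_zero, add_zero,
    zero_add]
  rw [← Complex.ofReal_mul, hsq]
  have hD0 : (D : ℂ) ≠ 0 := Nat.cast_ne_zero.mpr hD
  push_cast
  field_simp

end Bloch

lemma sum_eq_zero_of_sum_sum_dot_eq_zero {κ ι : Type*} [Fintype κ] [Fintype ι] (b : κ → ι → ℝ)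
    (h : ∑ h, ∑ k, ∑ i, b h i * b k i = 0) : ∑ j, b j = 0 := by
  have hsq : ∑ i, (∑ j, b j i) ^ 2 = 0 := by
    simp only [← h, sq, Finset.sum_mul_sum]
    rw [Finset.sum_comm]
    exact Finset.sum_congr rfl fun _ _ => Finset.sum_comm
  funext i
  have := (Finset.sum_eq_zero_iff_of_nonneg fun i _ => sq_nonneg _).mp hsq i (Finset.mem_univ _)
  simpa using this

lemma dot_eq_iff_overlap_eq {D g t : ℝ} (hD : 1 < D) :
    g = D / (D - 1) * t - 1 / (D - 1) ↔ D⁻¹ + (D - 1) / D * g = t := by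
  have : D - 1 ≠ 0 := by linarith
  have : D ≠ 0 := by linarith
  constructor <;> intro h
  · subst h; field_simp; ring
  · rw [← h]; field_simp; ring

lemma sum_eq_zero_of_bloch_gram {D : ℕ} {ι : Type*} [Fintype ι] (b : Fin D → ι → ℝ)
    (hG : ∀ h k : Fin D, ∑ i, b h i * b k i =
      (D : ℝ) / ((D : ℝ) - 1) * (if h = k then 1 else 0) - 1 / ((D : ℝ) - 1)) :
    ∑ j, b j = 0 := by
  refine sum_eq_zero_of_sum_sum_dot_eq_zero b ?_
  simp only [hG, Finset.sum_sub_distrib, ← Finset.mul_sum, Finset.sum_ite_eq, Finset.mem_univ,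
    if_true, Finset.sum_const, Finset.card_univ, Fintype.card_fin, nsmul_eq_mul]
  ring

theorem orthonormal_basis_iff_bloch_conditions_general (D : ℕ) (hD : 2 ≤ D)
    (γhat : Fin (D ^ 2 - 1) → Matrix (Fin D) (Fin D) ℂ)
    (htrace0 : ∀ i, (γhat i).trace = 0)
    (horth : ∀ i j, (γhat i * γhat j).trace = if i = j then 2 else 0)
    (ψ : Fin D → Fin D → ℂ)
    (b : Fin D → Fin (D ^ 2 - 1) → ℝ)
    (hb : ∀ j, Matrix.vecMulVec (ψ j) (star (ψ j)) =
      ((D : ℂ))⁻¹ • (1 : Matrix (Fin D) (Fin D) ℂ) +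
        ((Real.sqrt (((D : ℝ) - 1) / D) : ℝ) : ℂ) •
          ∑ i, ((b j i : ℝ) : ℂ) • ((((Real.sqrt 2 : ℝ) : ℂ))⁻¹ • γhat i)) :
    (∀ h k : Fin D, star (ψ h) ⬝ᵥ ψ k = if h = k then 1 else 0) ↔
      ((∑ j, b j) = 0 ∧
        ∀ h k : Fin D, ∑ i, b h i * b k i =
          (D : ℝ) / ((D : ℝ) - 1) * (if h = k then 1 else 0) - 1 / ((D : ℝ) - 1)) := by
  set e : Fin (D ^ 2 - 1) → Matrix (Fin D) (Fin D) ℂ := fun i => ((√2 : ℝ) : ℂ)⁻¹ • γhat i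
  have he0 : ∀ i, trace (e i) = 0 := fun i => by simp [e, htrace0]
  have he : ∀ i j, trace (e i * e j) = if i = j then 1 else 0 := fun i j => by
    have hs : ((√2 : ℝ) : ℂ)⁻¹ * ((√2 : ℝ) : ℂ)⁻¹ = 2⁻¹ := by
      rw [← mul_inv, ← Complex.ofReal_mul, Real.mul_self_sqrt zero_le_two]; norm_num
    simp only [e, smul_mul_smul_comm, trace_smul, horth, smul_eq_mul, hs]
    split_ifs <;> norm_num
  have hD0 : D ≠ 0 := by omega
  have hnorm : ∀ j, star (ψ j) ⬝ᵥ ψ j = 1 := fun j => by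
    rw [dotProduct_comm, ← trace_vecMulVec, hb j]
    exact trace_blochState hD0 he0 (b j)
  have hoverlap : ∀ h k, ‖star (ψ h) ⬝ᵥ ψ k‖ ^ 2 =
      (D : ℝ)⁻¹ + ((D : ℝ) - 1) / D * ∑ i, b h i * b k i := fun h k => by
    have := trace_vecMulVec_star_mul_vecMulVec_star (ψ h) (ψ k)
    rw [hb h, hb k] at this
    exact_mod_cast this.symm.trans (trace_blochState_mul_blochState hD0 he0 he (b h) (b k))
  have hD1 : (1 : ℝ) < D := by exact_mod_cast hD
  simp only [forall_star_dotProduct_eq_ite_iff_norm_sq ψ hnorm, hoverlap,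
    ← dot_eq_iff_overlap_eq hD1]
  exact (and_iff_right_of_imp (sum_eq_zero_of_bloch_gram b)).symm

/-- A family of `D` pure states in a `D`-dimensional Hilbert space, with generalized Bloch
vectors `b j` (relative to Hermitian traceless generators `γ̂` with `Tr(γ̂ i γ̂ j) = 2δ_{ij}`),
forms an orthonormal basis if and only if `∑ j, b j = 0` and
`b h · b k = D/(D-1) δ_{hk} − 1/(D-1)`. -/
theorem orthonormal_basis_iff_bloch_conditions (D : ℕ) (hD : 2 ≤ D)
    (γhat : Fin (D ^ 2 - 1) → Matrix (Fin D) (Fin D) ℂ)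
    (hherm : ∀ i, (γhat i).IsHermitian)
    (htrace0 : ∀ i, (γhat i).trace = 0)
    (horth : ∀ i j, (γhat i * γhat j).trace = if i = j then 2 else 0)
    (ψ : Fin D → Fin D → ℂ)
    (hψ : ∀ j, ∑ i, ‖ψ j i‖ ^ 2 = 1)
    (b : Fin D → Fin (D ^ 2 - 1) → ℝ)
    (hb : ∀ j, Matrix.vecMulVec (ψ j) (star (ψ j)) =
      ((D : ℂ))⁻¹ • (1 : Matrix (Fin D) (Fin D) ℂ) +
        ((Real.sqrt (((D : ℝ) - 1) / D) : ℝ) : ℂ) •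
          ∑ i, ((b j i : ℝ) : ℂ) • ((((Real.sqrt 2 : ℝ) : ℂ))⁻¹ • γhat i)) :
    (∀ h k : Fin D, star (ψ h) ⬝ᵥ ψ k = if h = k then 1 else 0) ↔
      ((∑ j, b j) = 0 ∧
        ∀ h k : Fin D, ∑ i, b h i * b k i =
          (D : ℝ) / ((D : ℝ) - 1) * (if h = k then 1 else 0) - 1 / ((D : ℝ) - 1)) :=
  orthonormal_basis_iff_bloch_conditions_general D hD γhat htrace0 horth ψ b hb
end

section
/- For any state |φ⟩ in a D-dimensional Hilbert space and any pair of mutually unbiased bases B₁, B₂, the Shannon entropies of the measurement distributions satisfy H_{B₁}(φ) + H_{B₂}(φ) ≥ log D. -/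
/-!
The change-of-basis matrix `c` between the two bases is an isometry of `ℓ²` with entries bounded
by `C = D^(-1/2)`. Interpolating between these two bounds along Hadamard's three lines
(Riesz–Thorin) gives `‖c a‖_q ≤ C^θ ‖a‖_p` for `p = 2/(1+θ)`, `q = 2/(1-θ)`, `0 < θ < 1`; in
logarithmic form this is the Rényi uncertainty relation `H_{1/(1+θ)} + H_{1/(1-θ)} ≥ -2 log C`.
As `θ → 0` both Rényi orders tend to `1`, and Rényi entropy tends to Shannon entropy because
`t ↦ log ∑ pᵢ^t` vanishes at `t = 1` with derivative `∑ pᵢ log pᵢ` there.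
-/

open Finset Filter Topology

section Entropy

variable {ι : Type*} [Fintype ι]

noncomputable def shannonEntropy (p : ι → ℝ) : ℝ := -∑ i, p i * Real.log (p i)

/-- Junk value `0` at `α = 1`, where the Rényi entropy is the Shannon entropy by continuity. -/
noncomputable def renyiEntropy (α : ℝ) (p : ι → ℝ) : ℝ := Real.log (∑ i, p i ^ α) / (1 - α)

lemma hasDerivAt_log_sum_rpow {p : ι → ℝ} (hp0 : ∀ i, 0 ≤ p i) (hp1 : ∑ i, p i = 1) :
    HasDerivAt (fun t : ℝ => Real.log (∑ i, p i ^ t)) (∑ i, p i * Real.log (p i)) 1 := by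
  have hsum : HasDerivAt (fun t : ℝ => ∑ i, p i ^ t) (∑ i, p i * Real.log (p i)) 1 := by
    refine HasDerivAt.fun_sum fun i _ => ?_
    rcases (hp0 i).eq_or_lt with hpi | hpi
    · rw [← hpi, zero_mul]
      refine (hasDerivAt_const (1 : ℝ) (0 : ℝ)).congr_of_eventuallyEq ?_
      filter_upwards [eventually_ne_nhds one_ne_zero] with t ht
      exact Real.zero_rpow ht
    · simpa using (Real.hasStrictDerivAt_const_rpow hpi 1).hasDerivAt
  have hsum1 : ∑ i, p i ^ (1 : ℝ) = 1 := by simp [hp1]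
  simpa [hsum1, hp1] using hsum.log (by rw [hsum1]; exact one_ne_zero)

lemma renyiEntropy_eq_neg_slope {p : ι → ℝ} (hp1 : ∑ i, p i = 1) (α : ℝ) :
    renyiEntropy α p = -slope (fun t : ℝ => Real.log (∑ i, p i ^ t)) 1 α := by
  rw [renyiEntropy, slope_def_field]
  simp only [Real.rpow_one, hp1, Real.log_one, sub_zero, ← div_neg, neg_sub]

lemma tendsto_renyiEntropy_shannonEntropy {p : ι → ℝ} (hp0 : ∀ i, 0 ≤ p i) (hp1 : ∑ i, p i = 1) :
    Tendsto (fun α => renyiEntropy α p) (𝓝[≠] 1) (𝓝 (shannonEntropy p)) := by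
  simp_rw [renyiEntropy_eq_neg_slope hp1]
  exact (hasDerivAt_iff_tendsto_slope.mp (hasDerivAt_log_sum_rpow hp0 hp1)).neg

lemma le_shannonEntropy_add_of_le_renyiEntropy_add {κ : Type*} [Fintype κ] {p : ι → ℝ}
    {q : κ → ℝ} (hp0 : ∀ i, 0 ≤ p i) (hp1 : ∑ i, p i = 1) (hq0 : ∀ j, 0 ≤ q j)
    (hq1 : ∑ j, q j = 1) {L : ℝ}
    (h : ∀ θ ∈ Set.Ioo (0 : ℝ) 1, L ≤ renyiEntropy (1 / (1 + θ)) p + renyiEntropy (1 / (1 - θ)) q) :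
    L ≤ shannonEntropy p + shannonEntropy q := by
  have hα : Tendsto (fun θ : ℝ => 1 / (1 + θ)) (𝓝[>] 0) (𝓝[≠] 1) := by
    refine tendsto_nhdsWithin_of_tendsto_nhds_of_eventually_within _ ?_ ?_
    · have : ContinuousAt (fun θ : ℝ => 1 / (1 + θ)) 0 := by fun_prop (disch := norm_num)
      simpa using this.tendsto.mono_left nhdsWithin_le_nhds
    · filter_upwards [self_mem_nhdsWithin] with θ (hθ : 0 < θ)
      rw [Set.mem_compl_singleton_iff, Ne, div_eq_one_iff_eq (by linarith)]
      linarith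
  have hβ : Tendsto (fun θ : ℝ => 1 / (1 - θ)) (𝓝[>] 0) (𝓝[≠] 1) := by
    refine tendsto_nhdsWithin_of_tendsto_nhds_of_eventually_within _ ?_ ?_
    · have : ContinuousAt (fun θ : ℝ => 1 / (1 - θ)) 0 := by fun_prop (disch := norm_num)
      simpa using this.tendsto.mono_left nhdsWithin_le_nhds
    · filter_upwards [Ioo_mem_nhdsGT one_pos] with θ ⟨hθ0, hθ1⟩
      rw [Set.mem_compl_singleton_iff, Ne, div_eq_one_iff_eq (by linarith)]
      linarith
  refine ge_of_tendsto (((tendsto_renyiEntropy_shannonEntropy hp0 hp1).comp hα).add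
    ((tendsto_renyiEntropy_shannonEntropy hq0 hq1).comp hβ)) ?_
  filter_upwards [Ioo_mem_nhdsGT one_pos] with θ hθ using h θ hθ

end Entropy

section Interpolation

open Complex ComplexConjugate Matrix HadamardThreeLines

/-- The factor `a` makes this vanish identically at `a = 0`, where `(‖a‖ : ℂ) ^ (s - 1)` alone
jumps (`0 ^ 0 = 1`); so it is entire in `s`. -/
noncomputable def phasePow (a s : ℂ) : ℂ := a * (‖a‖ : ℂ) ^ (s - 1)

lemma differentiable_phasePow (a : ℂ) : Differentiable ℂ (phasePow a) := by
  rcases eq_or_ne a 0 with rfl | ha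
  · rw [show phasePow 0 = fun _ => 0 by ext; simp [phasePow]]
    exact differentiable_const 0
  · exact (differentiable_const a).mul
      ((differentiable_id.sub_const 1).const_cpow (Or.inl (by simpa using ha)))

lemma phasePow_one (a : ℂ) : phasePow a 1 = a := by simp [phasePow]

lemma norm_phasePow (a : ℂ) {s : ℂ} (hs : 0 < s.re) : ‖phasePow a s‖ = ‖a‖ ^ s.re := by
  rcases eq_or_ne a 0 with rfl | ha
  · simp [phasePow, Real.zero_rpow hs.ne']
  · have ha' : 0 < ‖a‖ := norm_pos_iff.mpr ha
    rw [phasePow, norm_mul, norm_cpow_eq_rpow_re_of_pos ha', sub_re, one_re,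
      Real.rpow_sub_one ha'.ne', mul_div_cancel₀ _ ha'.ne']

lemma norm_phasePow_le (a : ℂ) {s : ℂ} {t₀ t₁ : ℝ} (ht₀ : 0 < t₀) (hs₀ : t₀ ≤ s.re)
    (hs₁ : s.re ≤ t₁) : ‖phasePow a s‖ ≤ ‖a‖ ^ t₀ + ‖a‖ ^ t₁ := by
  rw [norm_phasePow a (ht₀.trans_le hs₀)]
  rcases le_total ‖a‖ 1 with h | h
  · exact le_add_of_le_of_nonneg
      (Real.rpow_le_rpow_of_exponent_ge' (norm_nonneg a) h ht₀.le hs₀) (by positivity)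
  · exact le_add_of_nonneg_of_le (by positivity) (Real.rpow_le_rpow_of_exponent_le h hs₁)

lemma phasePow_conj_mul_self (a : ℂ) {s : ℝ} (hs : s + 1 ≠ 0) :
    phasePow (conj a) s * a = ((‖a‖ ^ (s + 1) : ℝ) : ℂ) := by
  rcases eq_or_ne a 0 with rfl | ha
  · simp [phasePow, Real.zero_rpow hs]
  · have ha' : 0 < ‖a‖ := norm_pos_iff.mpr ha
    rw [phasePow, RCLike.norm_conj, mul_right_comm, conj_mul', ← ofReal_one, ← ofReal_sub,
      ← ofReal_cpow ha'.le, ← ofReal_pow, ← ofReal_mul, ← Real.rpow_natCast,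
      ← Real.rpow_add ha']
    ring_nf

lemma re_ofReal_mul_one_add_div_two (r : ℝ) (z : ℂ) :
    (r * (1 + z) / 2).re = r * (1 + z.re) / 2 := by
  simp

lemma norm_phasePow_affine (y : ℂ) {r : ℝ} (hr : 0 < r) {z : ℂ} (hz : 0 ≤ z.re) :
    ‖phasePow y (r * (1 + z) / 2)‖ = ‖y‖ ^ (r * (1 + z.re) / 2) := by
  rw [norm_phasePow y, re_ofReal_mul_one_add_div_two]
  rw [re_ofReal_mul_one_add_div_two]
  positivity

lemma norm_mulVec_apply_le {ι κ : Type*} [Fintype ι] (c : Matrix κ ι ℂ) (x : ι → ℂ) (j : κ) :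
    ‖(c *ᵥ x) j‖ ≤ ∑ i, ‖c j i‖ * ‖x i‖ :=
  (norm_sum_le _ _).trans_eq (by simp_rw [norm_mul])

variable {ι κ : Type*} [Fintype ι] [Fintype κ]

/-- The analytic family of the Riesz–Thorin argument: on `re z = 0` the two vectors have the moduli
`|aᵢ|^(p/2)`, `|bⱼ|^(q/2)` (controlled by the `ℓ²` bound), on `re z = 1` the moduli `|aᵢ|^p`,
`|bⱼ|^q` (controlled by the entry bound). -/
noncomputable def rieszThorinFamily (c : Matrix κ ι ℂ) (a : ι → ℂ) (b : κ → ℂ) (p q : ℝ)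
    (z : ℂ) : ℂ :=
  ∑ j, phasePow (conj (b j)) (q * (1 + z) / 2) *
    (c *ᵥ fun i => phasePow (a i) (p * (1 + z) / 2)) j

variable (c : Matrix κ ι ℂ) (a : ι → ℂ) (b : κ → ℂ) {p q : ℝ}

lemma differentiable_rieszThorinFamily : Differentiable ℂ (rieszThorinFamily c a b p q) := by
  have hpow : ∀ (x : ℂ) (r : ℝ), Differentiable ℂ fun z : ℂ => phasePow x (r * (1 + z) / 2) :=
    fun x r => (differentiable_phasePow x).comp (by fun_prop)
  unfold rieszThorinFamily
  simp only [Matrix.mulVec, dotProduct]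
  fun_prop

lemma norm_rieszThorinFamily_le (z : ℂ) :
    ‖rieszThorinFamily c a b p q z‖ ≤ ∑ j, ‖phasePow (conj (b j)) (q * (1 + z) / 2)‖ *
      ‖(c *ᵥ fun i => phasePow (a i) (p * (1 + z) / 2)) j‖ :=
  (norm_sum_le _ _).trans_eq (by simp_rw [norm_mul])

lemma bddAbove_norm_rieszThorinFamily (hp : 0 < p) (hq : 0 < q) :
    BddAbove ((norm ∘ rieszThorinFamily c a b p q) '' verticalClosedStrip 0 1) := by
  refine ⟨∑ j, (‖b j‖ ^ (q / 2) + ‖b j‖ ^ q) * ∑ i, ‖c j i‖ * (‖a i‖ ^ (p / 2) + ‖a i‖ ^ p), ?_⟩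
  rintro _ ⟨z, ⟨hz₀, hz₁⟩, rfl⟩
  refine (norm_rieszThorinFamily_le c a b z).trans (sum_le_sum fun j _ => ?_)
  gcongr
  · rw [← RCLike.norm_conj (b j)]
    refine norm_phasePow_le _ (half_pos hq) ?_ ?_ <;> rw [re_ofReal_mul_one_add_div_two] <;> nlinarith
  · refine (norm_mulVec_apply_le c _ j).trans (sum_le_sum fun i _ => ?_)
    gcongr
    refine norm_phasePow_le _ (half_pos hp) ?_ ?_ <;> rw [re_ofReal_mul_one_add_div_two] <;> nlinarith

lemma norm_rieszThorinFamily_le_of_re_eq_zero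
    (hc : ∀ x : ι → ℂ, ∑ j, ‖(c *ᵥ x) j‖ ^ 2 ≤ ∑ i, ‖x i‖ ^ 2) (hp : 0 < p) (hq : 0 < q)
    {z : ℂ} (hz : z.re = 0) :
    ‖rieszThorinFamily c a b p q z‖ ≤ √(∑ j, ‖b j‖ ^ q) * √(∑ i, ‖a i‖ ^ p) := by
  have hsq : ∀ (y : ℂ) {r : ℝ}, 0 < r → ‖phasePow y (r * (1 + z) / 2)‖ ^ 2 = ‖y‖ ^ r := by
    intro y r hr
    rw [norm_phasePow_affine y hr hz.ge, hz, ← Real.rpow_mul_natCast (norm_nonneg y)]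
    norm_num
  refine (norm_rieszThorinFamily_le c a b z).trans ((Real.sum_mul_le_sqrt_mul_sqrt _ _ _).trans ?_)
  gcongr
  · simp_rw [hsq _ hq, RCLike.norm_conj, le_refl]
  · exact (hc _).trans_eq (by simp_rw [hsq _ hp])

lemma norm_rieszThorinFamily_le_of_re_eq_one {C : ℝ} (hc : ∀ j i, ‖c j i‖ ≤ C) (hp : 0 < p)
    (hq : 0 < q) {z : ℂ} (hz : z.re = 1) :
    ‖rieszThorinFamily c a b p q z‖ ≤ (∑ j, ‖b j‖ ^ q) * (C * ∑ i, ‖a i‖ ^ p) := by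
  have hnorm : ∀ (y : ℂ) {r : ℝ}, 0 < r → ‖phasePow y (r * (1 + z) / 2)‖ = ‖y‖ ^ r := by
    intro y r hr
    rw [norm_phasePow_affine y hr (by rw [hz]; exact zero_le_one), hz]
    ring_nf
  refine (norm_rieszThorinFamily_le c a b z).trans ?_
  rw [sum_mul]
  gcongr with j
  · simp_rw [hnorm _ hq, RCLike.norm_conj, le_refl]
  · refine (norm_mulVec_apply_le c _ j).trans ?_
    rw [mul_sum]
    gcongr with i
    · exact (norm_nonneg _).trans (hc j i)
    · exact hc j i
    · rw [hnorm _ hp]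

lemma rieszThorinFamily_mulVec_self {θ : ℝ} (hp : p * (1 + θ) / 2 = 1)
    (hq : q * (1 + θ) / 2 = q - 1) (hq₀ : q ≠ 0) :
    rieszThorinFamily c a (c *ᵥ a) p q θ = ((∑ j, ‖(c *ᵥ a) j‖ ^ q : ℝ) : ℂ) := by
  have hp' : (p : ℂ) * (1 + θ) / 2 = 1 := by exact_mod_cast hp
  have hq' : (q : ℂ) * (1 + θ) / 2 = ((q - 1 : ℝ) : ℂ) := by exact_mod_cast hq
  simp only [rieszThorinFamily, hp', hq', phasePow_one,
    phasePow_conj_mul_self _ (show q - 1 + 1 ≠ 0 by simpa using hq₀), sub_add_cancel]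
  push_cast
  rfl

lemma rpow_le_of_le_interp {P Q C θ : ℝ} (hP : 0 ≤ P) (hQ : 0 ≤ Q) (hC : 0 < C) (hθ : θ < 1)
    (h : Q ≤ (√Q * √P) ^ (1 - θ) * (Q * (C * P)) ^ θ) :
    Q ^ ((1 - θ) / 2) ≤ C ^ θ * P ^ ((1 + θ) / 2) := by
  rcases hQ.eq_or_lt with rfl | hQ
  · rw [Real.zero_rpow (by linarith)]
    positivity
  rcases hP.eq_or_lt with rfl | hP
  · simp only [Real.sqrt_zero, mul_zero, Real.zero_rpow (show 1 - θ ≠ 0 by linarith),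
      zero_mul] at h
    linarith
  have hlog := Real.log_le_log hQ h
  rw [Real.log_mul (by positivity) (by positivity), Real.log_rpow (by positivity),
    Real.log_rpow (by positivity), Real.log_mul (by positivity) (by positivity),
    Real.log_mul (by positivity) (by positivity), Real.log_mul (by positivity) (by positivity),
    Real.log_sqrt hQ.le, Real.log_sqrt hP.le] at hlog
  rw [← Real.log_le_log_iff (by positivity) (by positivity), Real.log_mul (by positivity)
    (by positivity), Real.log_rpow hQ, Real.log_rpow hC, Real.log_rpow hP]
  linarith

theorem rpow_sum_norm_mulVec_le {C : ℝ} (hC : 0 < C) (hc : ∀ j i, ‖c j i‖ ≤ C)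
    (hc₂ : ∀ x : ι → ℂ, ∑ j, ‖(c *ᵥ x) j‖ ^ 2 ≤ ∑ i, ‖x i‖ ^ 2) {θ : ℝ} (hθ₀ : 0 < θ)
    (hθ₁ : θ < 1) :
    (∑ j, ‖(c *ᵥ a) j‖ ^ (2 / (1 - θ))) ^ ((1 - θ) / 2) ≤
      C ^ θ * (∑ i, ‖a i‖ ^ (2 / (1 + θ))) ^ ((1 + θ) / 2) := by
  have h1add : 0 < 1 + θ := by linarith
  have h1sub : 0 < 1 - θ := by linarith
  have hp : 0 < 2 / (1 + θ) := by positivity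
  have hq : 0 < 2 / (1 - θ) := by positivity
  have hθ : (θ : ℂ) ∈ verticalClosedStrip 0 1 := ⟨by simpa using hθ₀.le, by simpa using hθ₁.le⟩
  have hinterp := norm_le_interp_of_mem_verticalClosedStrip₀₁' _ hθ
    (differentiable_rieszThorinFamily c a (c *ᵥ a)).diffContOnCl
    (bddAbove_norm_rieszThorinFamily c a _ hp hq)
    (fun z hz => norm_rieszThorinFamily_le_of_re_eq_zero c a _ hc₂ hp hq hz)
    (fun z hz => norm_rieszThorinFamily_le_of_re_eq_one c a _ hc hp hq hz)
  rw [rieszThorinFamily_mulVec_self c a (by field_simp) (by field_simp; ring) hq.ne',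
    Complex.norm_real, Real.norm_of_nonneg (by positivity), ofReal_re] at hinterp
  exact rpow_le_of_le_interp (by positivity) (by positivity) hC hθ₁ hinterp

end Interpolation

section OrthonormalBasis

open Matrix

variable {𝕜 ι κ E : Type*} [RCLike 𝕜] [Fintype ι] [Fintype κ] [NormedAddCommGroup E]
  [InnerProductSpace 𝕜 E] (u : OrthonormalBasis ι 𝕜 E) (v : OrthonormalBasis κ 𝕜 E)

local notation "⟪" x ", " y "⟫" => @inner 𝕜 _ _ x y

lemma OrthonormalBasis.toMatrix_apply_eq_inner (j : κ) (i : ι) :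
    v.toBasis.toMatrix u j i = ⟪v j, u i⟫ := by
  simp [Module.Basis.toMatrix_apply, OrthonormalBasis.repr_apply_apply]

lemma OrthonormalBasis.toMatrix_mulVec_inner (x : E) :
    v.toBasis.toMatrix u *ᵥ (fun i => ⟪u i, x⟫) = fun j => ⟪v j, x⟫ := by
  have h := u.toBasis.toMatrix_mulVec_repr v.toBasis x
  have hu : ⇑(u.toBasis.repr x) = fun i => ⟪u i, x⟫ := by
    ext i; simp [OrthonormalBasis.repr_apply_apply]
  have hv : ⇑(v.toBasis.repr x) = fun j => ⟪v j, x⟫ := by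
    ext j; simp [OrthonormalBasis.repr_apply_apply]
  rwa [hu, hv, OrthonormalBasis.coe_toBasis] at h

lemma OrthonormalBasis.sum_sq_norm_toMatrix_mulVec (y : ι → 𝕜) :
    ∑ j, ‖(v.toBasis.toMatrix u *ᵥ y) j‖ ^ 2 = ∑ i, ‖y i‖ ^ 2 := by
  obtain ⟨x, rfl⟩ : ∃ x, (fun i => ⟪u i, x⟫) = y :=
    ⟨u.repr.symm (WithLp.toLp 2 y), by ext i; simp [← OrthonormalBasis.repr_apply_apply]⟩
  rw [u.toMatrix_mulVec_inner v, u.sum_sq_norm_inner_right, v.sum_sq_norm_inner_right]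

lemma OrthonormalBasis.sum_rpow_norm_inner_pos {x : E} (hx : x ≠ 0) (r : ℝ) :
    0 < ∑ i, ‖⟪u i, x⟫‖ ^ r := by
  obtain ⟨i, hi⟩ : ∃ i, ⟪u i, x⟫ ≠ 0 := by
    by_contra! h
    exact hx (by simpa [h] using (u.sum_repr' x).symm)
  exact sum_pos' (fun _ _ => by positivity) ⟨i, mem_univ i, by positivity⟩

end OrthonormalBasis

section MaassenUffink

variable {ι κ E : Type*} [Fintype ι] [Fintype κ] [NormedAddCommGroup E] [InnerProductSpace ℂ E]
  (u : OrthonormalBasis ι ℂ E) (v : OrthonormalBasis κ ℂ E) {C : ℝ}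

local notation "⟪" x ", " y "⟫" => @inner ℂ _ _ x y

theorem neg_two_mul_log_le_renyiEntropy_add (hC : 0 < C) (huv : ∀ i j, ‖⟪u i, v j⟫‖ ≤ C)
    {x : E} (hx : x ≠ 0) {θ : ℝ} (hθ₀ : 0 < θ) (hθ₁ : θ < 1) :
    -2 * Real.log C ≤ renyiEntropy (1 / (1 + θ)) (fun i => ‖⟪u i, x⟫‖ ^ 2) +
      renyiEntropy (1 / (1 - θ)) (fun j => ‖⟪v j, x⟫‖ ^ 2) := by
  have key := rpow_sum_norm_mulVec_le (v.toBasis.toMatrix u) (fun i => ⟪u i, x⟫) hC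
    (fun j i => by rw [u.toMatrix_apply_eq_inner v, norm_inner_symm]; exact huv i j)
    (fun y => (u.sum_sq_norm_toMatrix_mulVec v y).le) hθ₀ hθ₁
  rw [u.toMatrix_mulVec_inner v] at key
  have hP := u.sum_rpow_norm_inner_pos hx (2 / (1 + θ))
  have hQ := v.sum_rpow_norm_inner_pos hx (2 / (1 - θ))
  rw [← Real.log_le_log_iff (by positivity) (by positivity), Real.log_mul (by positivity)
    (by positivity), Real.log_rpow hQ, Real.log_rpow hC, Real.log_rpow hP] at key
  have hα : 1 - 1 / (1 + θ) = θ / (1 + θ) := by field_simp; ring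
  have hβ : 1 - 1 / (1 - θ) = -(θ / (1 - θ)) := by
    field_simp [show 1 - θ ≠ 0 by linarith]
    ring
  simp only [renyiEntropy, ← Real.rpow_natCast_mul (norm_nonneg _), Nat.cast_ofNat, mul_one_div,
    hα, hβ, div_neg, div_div_eq_mul_div]
  rw [← sub_eq_add_neg, ← sub_div, le_div_iff₀ hθ₀]
  linarith

theorem neg_two_mul_log_le_shannonEntropy_add (hC : 0 < C) (huv : ∀ i j, ‖⟪u i, v j⟫‖ ≤ C)
    {x : E} (hx : ‖x‖ = 1) :
    -2 * Real.log C ≤ shannonEntropy (fun i => ‖⟪u i, x⟫‖ ^ 2) +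
      shannonEntropy (fun j => ‖⟪v j, x⟫‖ ^ 2) :=
  le_shannonEntropy_add_of_le_renyiEntropy_add (fun _ => by positivity)
    (by rw [u.sum_sq_norm_inner_right, hx, one_pow]) (fun _ => by positivity)
    (by rw [v.sum_sq_norm_inner_right, hx, one_pow])
    fun _ hθ => neg_two_mul_log_le_renyiEntropy_add u v hC huv
      (norm_ne_zero_iff.mp (by simp [hx])) hθ.1 hθ.2

end MaassenUffink

/-- Maassen–Uffink entropic uncertainty relation for mutually unbiased bases: for any unit
vector `φ` in a `D`-dimensional Hilbert space and any two mutually unbiased orthonormal bases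
`u`, `v`, the Shannon entropies of the two Born-rule measurement distributions satisfy
`H_u(φ) + H_v(φ) ≥ log D`. -/
theorem entropic_uncertainty_mub (D : ℕ) (hD : 0 < D)
    (u v : Fin D → EuclideanSpace ℂ (Fin D))
    (hu : Orthonormal ℂ u) (hv : Orthonormal ℂ v)
    (huspan : Submodule.span ℂ (Set.range u) = ⊤)
    (hvspan : Submodule.span ℂ (Set.range v) = ⊤)
    (hmub : ∀ i j, ‖(inner ℂ (u i) (v j) : ℂ)‖ ^ 2 = 1 / D)
    (φ : EuclideanSpace ℂ (Fin D)) (hφ : ‖φ‖ = 1) :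
    Real.log D ≤
      (-∑ i, ‖(inner ℂ (u i) φ : ℂ)‖ ^ 2 * Real.log (‖(inner ℂ (u i) φ : ℂ)‖ ^ 2)) +
      (-∑ j, ‖(inner ℂ (v j) φ : ℂ)‖ ^ 2 * Real.log (‖(inner ℂ (v j) φ : ℂ)‖ ^ 2)) := by
  have hunbiased : ∀ i j, ‖(inner ℂ (u i) (v j) : ℂ)‖ ≤ (√D)⁻¹ := fun i j => by
    rw [← Real.sqrt_inv, ← one_div, ← hmub i j, Real.sqrt_sq (norm_nonneg _)]
  have h := neg_two_mul_log_le_shannonEntropy_add (OrthonormalBasis.mk hu huspan.ge)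
    (OrthonormalBasis.mk hv hvspan.ge) (inv_pos.mpr (Real.sqrt_pos.mpr (Nat.cast_pos.mpr hD)))
    (by simpa only [OrthonormalBasis.coe_mk] using hunbiased) hφ
  calc Real.log D = -2 * Real.log (√D)⁻¹ := by
        rw [Real.log_inv, Real.log_sqrt D.cast_nonneg]; ring
    _ ≤ _ := by simpa only [OrthonormalBasis.coe_mk, shannonEntropy] using h
end
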